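/- arXiv:2003.04077 — 7 statements merged into one kernel-verified Lean document; each statement's English description precedes it below -/
import Mathlib

section
/- Let a, b : ℤ → [0,∞) be finitely supported functions. Then ∑_{n ∈ ℤ} max((a ⊛ b)(n), (a ⊛ b)(n−1)) ≥ 2 · ‖a‖₂ · ‖b‖₂, where ⊛ denotes max-convolution on ℤ. -/
/-!
Rescaling `a` by `β = max b` and `b` by `α = max a` multiplies `a ⊛ b` by `αβ` and makes
both maxima equal to `M = αβ`; since `β²‖a‖² + α²‖b‖² ≥ 2αβ‖a‖‖b‖`, it suffices to prove
`‖a‖² + ‖b‖² ≤ ∑ₙ d(n)`, where `d(n) = max((a ⊛ b)(n), (a ⊛ b)(n - 1))`, when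
`max a = max b = M`.

For `0 ≤ t ≤ M` the level sets `A = {a ≥ t}` and `B = {b ≥ t}` are nonempty and
`A + B ⊆ {a ⊛ b ≥ t²}`, hence `A + B + {0, 1} ⊆ {d ≥ t²}`; two applications of
Cauchy–Davenport in `ℤ` give `|A + B + {0, 1}| ≥ |A| + |B|`. Integrating against `2t dt`
over `[0, M]` (the layer-cake formula `∑ f² = ∫₀^M 2t |{f ≥ t}| dt`) yields the claim.
-/

open Finset
open Set Function MeasureTheory intervalIntegral
open scoped Pointwise

lemma Set.Finite.range_of_support {ι M : Type*} [Zero M] {f : ι → M} (hf : (support f).Finite) :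
    (range f).Finite :=
  ((hf.image f).insert 0).subset (range_subset_insert_image_support f)

lemma exists_isGreatest_range_of_finite_support {ι : Type*} [Nonempty ι] {f : ι → ℝ}
    (hf : (support f).Finite) : ∃ M, IsGreatest (range f) M :=
  ⟨sSup (range f), (range_nonempty f).csSup_mem hf.range_of_support,
    fun _ h => le_csSup hf.range_of_support.bddAbove h⟩

lemma IsGreatest.smul_range {ι : Type*} {f : ι → ℝ} {M r : ℝ} (hf : IsGreatest (range f) M)
    (hr : 0 ≤ r) : IsGreatest (range (r • f)) (r * M) := by
  obtain ⟨i, hi⟩ := hf.1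
  exact ⟨⟨i, by simp [hi]⟩,
    forall_mem_range.2 fun i => mul_le_mul_of_nonneg_left (hf.2 ⟨i, rfl⟩) hr⟩

lemma tsum_sq_eq_zero_of_isGreatest_zero {ι : Type*} {f : ι → ℝ} (hf : ∀ i, 0 ≤ f i)
    (h : IsGreatest (range f) 0) : ∑' i, f i ^ 2 = 0 := by
  have : f = 0 := funext fun i => le_antisymm (h.2 ⟨i, rfl⟩) (hf i)
  simp [this]

theorem card_add_card_le_card_add_add_pair {α : Type*} [LinearOrder α] [Add α]
    [IsCancelAdd α] [AddLeftMono α] [AddRightMono α] {A B : Finset α} (hA : A.Nonempty)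
    (hB : B.Nonempty) {x y : α} (hxy : x ≠ y) : #A + #B ≤ #(A + B + {x, y}) := by
  have hAB := cauchy_davenport_add_of_linearOrder_isCancelAdd hA hB
  have hABxy := cauchy_davenport_add_of_linearOrder_isCancelAdd (hA.add hB) (insert_nonempty x {y})
  rw [card_pair hxy] at hABxy
  have := hA.card_pos
  omega

section LayerCake

lemma intervalIntegrable_indicator_sq_le (c a b : ℝ) :
    IntervalIntegrable ({t : ℝ | t ^ 2 ≤ c}.indicator (2 * ·)) volume a b := by
  rw [intervalIntegrable_iff]
  exact ((continuous_const.mul continuous_id).intervalIntegrable a b).def'.indicator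
    (measurableSet_le (by fun_prop) measurable_const)

lemma integral_indicator_sq_le {c M : ℝ} (hc : 0 ≤ c) (hM : 0 ≤ M) :
    ∫ t in 0..M, {t : ℝ | t ^ 2 ≤ c}.indicator (2 * ·) t = min c (M ^ 2) := by
  set r := min √c M with hr_def
  have hr : r ∈ Icc 0 M := ⟨le_min (Real.sqrt_nonneg c) hM, min_le_right _ _⟩
  have hcongr : EqOn ({t : ℝ | t ^ 2 ≤ c}.indicator (2 * ·)) ({t | t ≤ r}.indicator (2 * ·))
      (uIcc 0 M) := by
    intro t ht
    rw [uIcc_of_le hM] at ht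
    have : t ^ 2 ≤ c ↔ t ≤ r := by
      rw [le_min_iff, Real.le_sqrt ht.1 hc, and_iff_left ht.2]
    simp only [indicator, mem_ofPred_eq, this]
  have hr2 : r ^ 2 = min c (M ^ 2) := by
    rcases le_total √c M with h | h
    · rw [hr_def, min_eq_left h, min_eq_left ((Real.sqrt_le_left hM).mp h), Real.sq_sqrt hc]
    · rw [hr_def, min_eq_right h, min_eq_right ((Real.le_sqrt hM hc).mp h)]
  rw [integral_congr hcongr, integral_indicator hr, intervalIntegral.integral_const_mul,
    integral_id, ← hr2]
  ring

variable {ι : Type*} (s : Finset ι) (g : ι → ℝ)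

lemma two_mul_card_filter_sq_le_eq_sum_indicator (t : ℝ) :
    2 * t * #{i ∈ s | t ^ 2 ≤ g i} = ∑ i ∈ s, {t : ℝ | t ^ 2 ≤ g i}.indicator (2 * ·) t := by
  rw [card_filter, Nat.cast_sum, mul_sum]
  simp [indicator_apply]

lemma intervalIntegrable_two_mul_card_filter_sq_le (a b : ℝ) :
    IntervalIntegrable (fun t => 2 * t * #{i ∈ s | t ^ 2 ≤ g i}) volume a b := by
  simp_rw [two_mul_card_filter_sq_le_eq_sum_indicator]
  simpa only [Finset.sum_fn] using
    IntervalIntegrable.sum s fun i _ => intervalIntegrable_indicator_sq_le (g i) a b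

lemma integral_two_mul_card_filter_sq_le {M : ℝ} (hg : ∀ i ∈ s, 0 ≤ g i) (hM : 0 ≤ M) :
    ∫ t in 0..M, 2 * t * #{i ∈ s | t ^ 2 ≤ g i} = ∑ i ∈ s, min (g i) (M ^ 2) := by
  simp_rw [two_mul_card_filter_sq_le_eq_sum_indicator]
  rw [integral_finsetSum fun i _ => intervalIntegrable_indicator_sq_le (g i) 0 M]
  exact sum_congr rfl fun i hi => integral_indicator_sq_le (hg i hi) hM

lemma tsum_sq_eq_integral_two_mul_card_filter {f : ι → ℝ} {s : Finset ι} {M : ℝ}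
    (hs : support f ⊆ s) (hf : ∀ i, 0 ≤ f i) (hfM : ∀ i, f i ≤ M) (hM : 0 ≤ M) :
    ∑' i, f i ^ 2 = ∫ t in 0..M, 2 * t * #{i ∈ s | t ^ 2 ≤ f i ^ 2} := by
  rw [tsum_eq_sum' ((support_pow f two_ne_zero).trans_subset hs),
    integral_two_mul_card_filter_sq_le s _ (fun i _ => sq_nonneg (f i)) hM]
  exact sum_congr rfl fun i _ => (min_eq_left (pow_le_pow_left₀ (hf i) (hfM i) 2)).symm

lemma integral_two_mul_card_filter_le_tsum {s : Finset ι} {M : ℝ} (hs : support g ⊆ s)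
    (hg : ∀ i, 0 ≤ g i) (hM : 0 ≤ M) :
    ∫ t in 0..M, 2 * t * #{i ∈ s | t ^ 2 ≤ g i} ≤ ∑' i, g i := by
  rw [integral_two_mul_card_filter_sq_le s g (fun i _ => hg i) hM, tsum_eq_sum' hs]
  exact sum_le_sum fun i _ => min_le_left _ _

lemma filter_sq_le_nonempty {f : ι → ℝ} {s : Finset ι} (hs : support f ⊆ s) {M t : ℝ}
    (hM : 0 < M) (hf : IsGreatest (range f) M) (ht : t ∈ Icc 0 M) :
    {i ∈ s | t ^ 2 ≤ f i ^ 2}.Nonempty := by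
  obtain ⟨i, hi⟩ := hf.1
  exact ⟨i, mem_filter.2 ⟨hs (by simp [hi, hM.ne']), hi ▸ pow_le_pow_left₀ ht.1 ht.2 2⟩⟩

end LayerCake

section MaxConv

variable {G : Type*} [AddGroup G]

/-- `maxConv a b = a ⊛ b`. The supremum is attained when `b` has finite support; otherwise
`⨆` may take the junk value `0`. -/
noncomputable def maxConv (a b : G → ℝ) (n : G) : ℝ := ⨆ m, a (n - m) * b m

variable {a b : G → ℝ}

lemma maxConv_nonneg (ha : ∀ n, 0 ≤ a n) (hb : ∀ n, 0 ≤ b n) (n : G) : 0 ≤ maxConv a b n :=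
  Real.iSup_nonneg fun _ => mul_nonneg (ha _) (hb _)

lemma mul_le_maxConv (hb : (support b).Finite) (x y : G) : a x * b y ≤ maxConv a b (x + y) := by
  have hbdd : BddAbove (range fun m => a (x + y - m) * b m) :=
    (hb.subset (support_mul_subset_right _ _)).range_of_support.bddAbove
  have := le_ciSup hbdd y
  rwa [add_sub_cancel_right] at this

lemma support_maxConv_subset : support (maxConv a b) ⊆ support a + support b := by
  intro n hn
  by_contra hnot
  have hzero (m : G) : a (n - m) * b m = 0 := by
    by_contra h
    exact hnot ⟨n - m, left_ne_zero_of_mul h, m, right_ne_zero_of_mul h, sub_add_cancel n m⟩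
  exact hn (by simp [maxConv, hzero])

lemma maxConv_smul_smul {r s : ℝ} (hr : 0 ≤ r) (hs : 0 ≤ s) :
    maxConv (r • a) (s • b) = (r * s) • maxConv a b := by
  ext n
  simp only [maxConv, Pi.smul_apply, smul_eq_mul, Real.mul_iSup_of_nonneg (mul_nonneg hr hs)]
  congr 1 with m
  ring

end MaxConv

section Integers

variable {a b : ℤ → ℝ}

lemma support_max_sub_one_subset {c : ℤ → ℝ} {S : Finset ℤ} (hc : support c ⊆ S) :
    support (fun n => max (c n) (c (n - 1))) ⊆ ↑(S + {0, 1}) := by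
  intro n hn
  by_contra hnot
  have h0 : c n = 0 := by
    by_contra h
    exact hnot (mem_add.2 ⟨n, hc h, 0, by simp, add_zero n⟩)
  have h1 : c (n - 1) = 0 := by
    by_contra h
    exact hnot (mem_add.2 ⟨n - 1, hc h, 1, by simp, sub_add_cancel n 1⟩)
  exact hn (by simp [h0, h1])

lemma card_filter_add_card_filter_le_card_filter_max (ha : ∀ n, 0 ≤ a n) (hb : ∀ n, 0 ≤ b n)
    (hsb : (support b).Finite) {sa sb : Finset ℤ} {t : ℝ} (ht : 0 ≤ t)
    (hA : {n ∈ sa | t ^ 2 ≤ a n ^ 2}.Nonempty) (hB : {n ∈ sb | t ^ 2 ≤ b n ^ 2}.Nonempty) :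
    #{n ∈ sa | t ^ 2 ≤ a n ^ 2} + #{n ∈ sb | t ^ 2 ≤ b n ^ 2} ≤
      #{n ∈ sa + sb + {0, 1} | t ^ 2 ≤ max (maxConv a b n) (maxConv a b (n - 1))} := by
  refine (card_add_card_le_card_add_add_pair hA hB zero_ne_one).trans (card_le_card ?_)
  intro n hn
  obtain ⟨_, hxy, e, he, rfl⟩ := mem_add.1 hn
  obtain ⟨x, hx, y, hy, rfl⟩ := mem_add.1 hxy
  rw [mem_filter] at hx hy ⊢
  refine ⟨add_mem_add (add_mem_add hx.1 hy.1) he, ?_⟩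
  have htx : t ≤ a x := (pow_le_pow_iff_left₀ ht (ha x) two_ne_zero).1 hx.2
  have hty : t ≤ b y := (pow_le_pow_iff_left₀ ht (hb y) two_ne_zero).1 hy.2
  have hshift : maxConv a b (x + y) ≤
      max (maxConv a b (x + y + e)) (maxConv a b (x + y + e - 1)) := by
    rcases mem_insert.1 he with rfl | he
    · simp
    · simp [mem_singleton.1 he]
  calc t ^ 2 = t * t := sq t
    _ ≤ a x * b y := mul_le_mul htx hty ht (ha x)
    _ ≤ maxConv a b (x + y) := mul_le_maxConv hsb x y
    _ ≤ _ := hshift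

theorem tsum_sq_add_tsum_sq_le_tsum_max_maxConv (ha : ∀ n, 0 ≤ a n) (hb : ∀ n, 0 ≤ b n)
    (hsa : (support a).Finite) (hsb : (support b).Finite) {M : ℝ} (hM : 0 < M)
    (haM : IsGreatest (range a) M) (hbM : IsGreatest (range b) M) :
    ∑' n, a n ^ 2 + ∑' n, b n ^ 2 ≤ ∑' n, max (maxConv a b n) (maxConv a b (n - 1)) := by
  set sa := hsa.toFinset
  set sb := hsb.toFinset
  have hsa' : support a ⊆ sa := hsa.coe_toFinset.ge
  have hsb' : support b ⊆ sb := hsb.coe_toFinset.ge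
  set d := fun n => max (maxConv a b n) (maxConv a b (n - 1))
  have hd : support d ⊆ ↑(sa + sb + {0, 1}) :=
    support_max_sub_one_subset
      (support_maxConv_subset.trans (coe_add sa sb ▸ add_subset_add hsa' hsb'))
  have hint (s : Finset ℤ) (g : ℤ → ℝ) := intervalIntegrable_two_mul_card_filter_sq_le s g 0 M
  calc ∑' n, a n ^ 2 + ∑' n, b n ^ 2
      = ∫ t in 0..M,
          (2 * t * #{n ∈ sa | t ^ 2 ≤ a n ^ 2} + 2 * t * #{n ∈ sb | t ^ 2 ≤ b n ^ 2}) := by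
        rw [integral_add (hint _ _) (hint _ _),
          tsum_sq_eq_integral_two_mul_card_filter hsa' ha (fun n => haM.2 ⟨n, rfl⟩) hM.le,
          tsum_sq_eq_integral_two_mul_card_filter hsb' hb (fun n => hbM.2 ⟨n, rfl⟩) hM.le]
    _ ≤ ∫ t in 0..M, 2 * t * #{n ∈ sa + sb + {0, 1} | t ^ 2 ≤ d n} := by
        refine integral_mono_on hM.le ((hint _ _).add (hint _ _)) (hint _ _) fun t ht => ?_
        rw [← mul_add]
        gcongr
        · linarith [ht.1]
        · exact_mod_cast card_filter_add_card_filter_le_card_filter_max ha hb hsb ht.1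
            (filter_sq_le_nonempty hsa' hM haM ht) (filter_sq_le_nonempty hsb' hM hbM ht)
    _ ≤ ∑' n, d n :=
        integral_two_mul_card_filter_le_tsum _ hd
          (fun n => (maxConv_nonneg ha hb n).trans (le_max_left _ _)) hM.le

theorem mul_tsum_sq_add_mul_tsum_sq_le (ha : ∀ n, 0 ≤ a n) (hb : ∀ n, 0 ≤ b n)
    (hsa : (support a).Finite) (hsb : (support b).Finite) {α β : ℝ} (hα : 0 < α) (hβ : 0 < β)
    (haα : IsGreatest (range a) α) (hbβ : IsGreatest (range b) β) :
    β ^ 2 * ∑' n, a n ^ 2 + α ^ 2 * ∑' n, b n ^ 2 ≤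
      α * β * ∑' n, max (maxConv a b n) (maxConv a b (n - 1)) := by
  have key := tsum_sq_add_tsum_sq_le_tsum_max_maxConv (a := β • a) (b := α • b)
    (fun n => mul_nonneg hβ.le (ha n)) (fun n => mul_nonneg hα.le (hb n))
    (hsa.subset (support_const_smul_subset _ _)) (hsb.subset (support_const_smul_subset _ _))
    (mul_pos hα hβ) (mul_comm β α ▸ haα.smul_range hβ.le) (hbβ.smul_range hα.le)
  rw [maxConv_smul_smul hβ.le hα.le, mul_comm β α] at key
  simpa only [Pi.smul_apply, smul_eq_mul, mul_pow, tsum_mul_left,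
    ← mul_max_of_nonneg _ _ (mul_pos hα hβ).le] using key

end Integers

theorem discrete_prekopa_leindler_half
    (a b : ℤ → ℝ) (ha : ∀ n, 0 ≤ a n) (hb : ∀ n, 0 ≤ b n)
    (hsa : (Function.support a).Finite) (hsb : (Function.support b).Finite) :
    ∑' n : ℤ, max (⨆ m : ℤ, a (n - m) * b m) (⨆ m : ℤ, a (n - 1 - m) * b m) ≥
      2 * Real.sqrt (∑' n : ℤ, a n ^ 2) * Real.sqrt (∑' n : ℤ, b n ^ 2) := by
  change 2 * √(∑' n, a n ^ 2) * √(∑' n, b n ^ 2) ≤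
    ∑' n, max (maxConv a b n) (maxConv a b (n - 1))
  have hS : 0 ≤ ∑' n, max (maxConv a b n) (maxConv a b (n - 1)) :=
    tsum_nonneg fun n => (maxConv_nonneg ha hb n).trans (le_max_left _ _)
  obtain ⟨α, haα⟩ := exists_isGreatest_range_of_finite_support hsa
  obtain ⟨β, hbβ⟩ := exists_isGreatest_range_of_finite_support hsb
  rcases ((ha 0).trans (haα.2 ⟨0, rfl⟩)).eq_or_lt with hα | hα
  · rw [tsum_sq_eq_zero_of_isGreatest_zero ha (hα ▸ haα)]
    simpa using hS
  rcases ((hb 0).trans (hbβ.2 ⟨0, rfl⟩)).eq_or_lt with hβ | hβ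
  · rw [tsum_sq_eq_zero_of_isGreatest_zero hb (hβ ▸ hbβ)]
    simpa using hS
  set X := ∑' n, a n ^ 2
  set Y := ∑' n, b n ^ 2
  have hAMGM : α * β * (2 * √X * √Y) ≤ β ^ 2 * X + α ^ 2 * Y := by
    have := two_mul_le_add_sq (β * √X) (α * √Y)
    rw [mul_pow, mul_pow, Real.sq_sqrt (tsum_nonneg fun n => sq_nonneg (a n)),
      Real.sq_sqrt (tsum_nonneg fun n => sq_nonneg (b n))] at this
    linarith
  have hscaled := mul_tsum_sq_add_mul_tsum_sq_le ha hb hsa hsb hα hβ haα hbβ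
  exact le_of_mul_le_mul_left (hAMGM.trans hscaled) (mul_pos hα hβ)
end

section
/- Let A, B ⊆ ℤ be finite nonempty sets and let U ⊆ ℤ be a set with |U| ≤ 2 (i.e., U is contained in a two-element set). Then |A + B + U| ≥ |A|^{1/2} · |B|^{1/2} · |U|. -/
/-!
Applying Cauchy–Davenport twice gives `|A + B + U| ≥ |A| + |B| + |U| - 2`. With `x = √|A|`,
`y = √|B|` and `u = |U| ∈ {1, 2}` it remains to see `u x y ≤ x² + y² + u - 2`, and indeed
`x² + y² + u - 2 - u x y = (x - y)² + (2 - u)(x y - 1) ≥ 0` since `x y ≥ 1`.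
-/

open scoped Pointwise

open Finset in
theorem card_add_card_add_card_le_card_add_add {α : Type*} [LinearOrder α]
    [Add α] [IsCancelAdd α] [AddLeftMono α] [AddRightMono α] {s t u : Finset α}
    (hs : s.Nonempty) (ht : t.Nonempty) (hu : u.Nonempty) :
    #s + #t + #u ≤ #(s + t + u) + 2 := by
  have hst := cauchy_davenport_add_of_linearOrder_isCancelAdd hs ht
  have hstu := cauchy_davenport_add_of_linearOrder_isCancelAdd (hs.add ht) hu
  have := hs.card_pos
  have := ht.card_pos
  have := hu.card_pos
  omega

theorem mul_mul_le_sq_add_sq_add_sub_two {x y u : ℝ} (hxy : 1 ≤ x * y) (hu : u ≤ 2) :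
    u * (x * y) ≤ x ^ 2 + y ^ 2 + u - 2 := by
  have hsq : 0 ≤ (x - y) ^ 2 + (2 - u) * (x * y - 1) :=
    add_nonneg (sq_nonneg _) (mul_nonneg (sub_nonneg.2 hu) (sub_nonneg.2 hxy))
  linarith [show x ^ 2 + y ^ 2 + u - 2 - u * (x * y) = (x - y) ^ 2 + (2 - u) * (x * y - 1) by ring]

theorem sumset_with_small_set
    (A B U : Finset ℤ) (hA : A.Nonempty) (hB : B.Nonempty) (hU : U.card ≤ 2) :
    ((A + B + U).card : ℝ) ≥ Real.sqrt A.card * Real.sqrt B.card * U.card := by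
  rcases U.eq_empty_or_nonempty with rfl | hU₀
  · simp
  have hCD : (A.card + B.card + U.card : ℝ) ≤ (A + B + U).card + 2 := by
    exact_mod_cast card_add_card_add_card_le_card_add_add hA hB hU₀
  have hsqrt : 1 ≤ Real.sqrt A.card * Real.sqrt B.card := by
    rw [← Real.sqrt_mul (Nat.cast_nonneg _), Real.one_le_sqrt]
    exact_mod_cast Nat.one_le_iff_ne_zero.2 (Nat.mul_ne_zero hA.card_ne_zero hB.card_ne_zero)
  have hkey := mul_mul_le_sq_add_sq_add_sub_two hsqrt (u := U.card) (by exact_mod_cast hU)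
  rw [Real.sq_sqrt (Nat.cast_nonneg _), Real.sq_sqrt (Nat.cast_nonneg _)] at hkey
  linarith
end

section
/- Let f, g : ℝ → [0,∞) be integrable, bounded, compactly supported measurable functions, and define the max-convolution (f ⊛ g)(x) := sup_{y ∈ ℝ} f(x−y)·g(y). Then ∫_ℝ (f ⊛ g) ≥ 2 · ‖f‖₂ · ‖g‖₂ (where the integral on the left is interpreted, e.g., via the upper integral if f ⊛ g is not measurable). -/
open MeasureTheory Set
open scoped ENNReal

theorem pl_key (f g : ℝ → ℝ) (hf0 : ∀ x, 0 ≤ f x) (hg0 : ∀ x, 0 ≤ g x)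
    (hfi : Integrable f) (hgi : Integrable g)
    (hfm : Measurable f) (hgm : Measurable g)
    (hfb : ∃ C, ∀ x, f x ≤ C) (hgb : ∃ C, ∀ x, g x ≤ C)
    (hfs : HasCompactSupport f) (hgs : HasCompactSupport g)
    (m : ℝ) (hm : 0 < m) (hfsup : (⨆ x, f x) = m) (hgsup : (⨆ x, g x) = m) :
    ENNReal.ofReal (∫ x : ℝ, f x ^ 2) + ENNReal.ofReal (∫ x : ℝ, g x ^ 2) ≤
      ∫⁻ x : ℝ, ENNReal.ofReal (⨆ y : ℝ, f (x - y) * g y) := by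
  classical
  obtain ⟨Cf, hCf⟩ := hfb
  obtain ⟨Cg, hCg⟩ := hgb
  have hbddf : BddAbove (Set.range f) := ⟨Cf, by rintro _ ⟨x, rfl⟩; exact hCf x⟩
  have hbddg : BddAbove (Set.range g) := ⟨Cg, by rintro _ ⟨x, rfl⟩; exact hCg x⟩
  have hfle : ∀ x, f x ≤ m := fun x => hfsup ▸ le_ciSup hbddf x
  have hgle : ∀ x, g x ≤ m := fun x => hgsup ▸ le_ciSup hbddg x
  set φ : ℝ → ℝ := fun x => ⨆ y : ℝ, f (x - y) * g y with hφdef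
  have hconv_bdd : ∀ x, BddAbove (Set.range fun y => f (x - y) * g y) := by
    intro x
    refine ⟨m * m, ?_⟩
    rintro _ ⟨y, rfl⟩
    exact mul_le_mul (hfle _) (hgle _) (hg0 _) hm.le
  have hφ_ge : ∀ x y, f (x - y) * g y ≤ φ x := fun x y => le_ciSup (hconv_bdd x) y
  have hφ_nonneg : ∀ x, 0 ≤ φ x :=
    fun x => Real.iSup_nonneg fun y => mul_nonneg (hf0 _) (hg0 _)
  -- level sets
  set A : ℚ → Set ℝ := fun q => {x | (q : ℝ) ≤ f x} with hA
  set B : ℚ → Set ℝ := fun q => {x | (q : ℝ) ≤ g x} with hB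
  have hAmeas : ∀ q, MeasurableSet (A q) := fun q => measurableSet_le measurable_const hfm
  have hBmeas : ∀ q, MeasurableSet (B q) := fun q => measurableSet_le measurable_const hgm
  have hAne : ∀ q : ℚ, (q : ℝ) < m → (A q).Nonempty := by
    intro q hq
    obtain ⟨x, hx⟩ := exists_lt_of_lt_ciSup (hfsup ▸ hq)
    exact ⟨x, hx.le⟩
  have hBne : ∀ q : ℚ, (q : ℝ) < m → (B q).Nonempty := by
    intro q hq
    obtain ⟨x, hx⟩ := exists_lt_of_lt_ciSup (hgsup ▸ hq)
    exact ⟨x, hx.le⟩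
  have hAsub : ∀ q : ℚ, 0 < q → A q ⊆ tsupport f := by
    intro q hq x hx
    apply subset_tsupport
    have hq' : (0 : ℝ) < q := by exact_mod_cast hq
    exact (lt_of_lt_of_le hq' hx).ne'
  have hBsub : ∀ q : ℚ, 0 < q → B q ⊆ tsupport g := by
    intro q hq x hx
    apply subset_tsupport
    have hq' : (0 : ℝ) < q := by exact_mod_cast hq
    exact (lt_of_lt_of_le hq' hx).ne'
  have hAbdd : ∀ q : ℚ, 0 < q → BddAbove (A q) :=
    fun q hq => hfs.isCompact.bddAbove.mono (hAsub q hq)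
  have hBbdd : ∀ q : ℚ, 0 < q → BddBelow (B q) :=
    fun q hq => hgs.isCompact.bddBelow.mono (hBsub q hq)
  -- selection of near-extremal points
  have hsel : ∀ (q : ℚ) (n : ℕ), ∃ p : ℝ × ℝ, (0 < q ∧ (q : ℝ) < m) →
      ((q : ℝ) ≤ f p.1 ∧ (q : ℝ) ≤ g p.2 ∧
        sSup (A q) - 1 / (n + 1) ≤ p.1 ∧ p.2 ≤ sInf (B q) + 1 / (n + 1)) := by
    intro q n
    by_cases h : 0 < q ∧ (q : ℝ) < m
    · have hd : (0 : ℝ) < 1 / (n + 1) := by positivity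
      obtain ⟨a, ha, ha2⟩ := exists_lt_of_lt_csSup (hAne q h.2)
        (show sSup (A q) - 1 / (n + 1) < sSup (A q) by linarith)
      obtain ⟨b, hb, hb2⟩ := exists_lt_of_csInf_lt (hBne q h.2)
        (show sInf (B q) < sInf (B q) + 1 / (n + 1) by linarith)
      exact ⟨(a, b), fun _ => ⟨ha, hb, ha2.le, hb2.le⟩⟩
    · exact ⟨(0, 0), fun hc => absurd hc h⟩
  choose sel hsel using hsel
  -- the measurable minorant ψ
  set C : ℚ × ℕ → Set ℝ := fun p =>
    if 0 < p.1 ∧ ((p.1 : ℝ)) < m then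
      {x | ((p.1 : ℝ)) ≤ f (x - (sel p.1 p.2).2)} ∪ {x | ((p.1 : ℝ)) ≤ g (x - (sel p.1 p.2).1)}
    else ∅ with hC
  have hCmeas : ∀ p, MeasurableSet (C p) := by
    intro p
    simp only [hC]
    split_ifs
    · exact (measurableSet_le measurable_const (hfm.comp (measurable_sub_const _))).union
        (measurableSet_le measurable_const (hgm.comp (measurable_sub_const _)))
    · exact MeasurableSet.empty
  set ψ : ℝ → ℝ := fun x => ⨆ p : ℚ × ℕ, (C p).indicator (fun _ => ((p.1 : ℝ)) ^ 2) x with hψ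
  have hind_le : ∀ p x, (C p).indicator (fun _ => ((p.1 : ℝ)) ^ 2) x ≤ m ^ 2 := by
    intro p x
    rw [Set.indicator_apply]
    split_ifs with hx
    · simp only [hC] at hx
      by_cases hcond : 0 < p.1 ∧ ((p.1 : ℝ)) < m
      · have h0 : (0 : ℝ) ≤ (p.1 : ℝ) := by exact_mod_cast hcond.1.le
        exact pow_le_pow_left₀ h0 hcond.2.le 2
      · simp [hcond] at hx
    · positivity
  have hψbdd : ∀ x, BddAbove (Set.range fun p : ℚ × ℕ =>
      (C p).indicator (fun _ => ((p.1 : ℝ)) ^ 2) x) := by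
    intro x
    exact ⟨m ^ 2, by rintro _ ⟨p, rfl⟩; exact hind_le p x⟩
  have hψ_nonneg : ∀ x, 0 ≤ ψ x :=
    fun x => Real.iSup_nonneg fun p => Set.indicator_nonneg (fun _ _ => sq_nonneg _) x
  have hψ_meas : Measurable ψ :=
    Measurable.iSup fun p => Measurable.indicator measurable_const (hCmeas p)
  -- ψ ≤ φ
  have hψ_le : ∀ x, ψ x ≤ φ x := by
    intro x
    apply ciSup_le
    intro p
    rw [Set.indicator_apply]
    split_ifs with hx
    · simp only [hC] at hx
      by_cases hcond : 0 < p.1 ∧ ((p.1 : ℝ)) < m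
      · rw [if_pos hcond] at hx
        obtain ⟨hfa, hgb, -, -⟩ := hsel p.1 p.2 hcond
        have hq0 : (0 : ℝ) ≤ (p.1 : ℝ) := by exact_mod_cast hcond.1.le
        rcases hx with hx | hx
        · calc ((p.1 : ℝ)) ^ 2 = (p.1 : ℝ) * (p.1 : ℝ) := sq ((p.1 : ℝ))
            _ ≤ f (x - (sel p.1 p.2).2) * g ((sel p.1 p.2).2) :=
              mul_le_mul hx hgb hq0 (hf0 _)
            _ ≤ φ x := hφ_ge x _
        · calc ((p.1 : ℝ)) ^ 2 = (p.1 : ℝ) * (p.1 : ℝ) := sq ((p.1 : ℝ))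
            _ ≤ f ((sel p.1 p.2).1) * g (x - (sel p.1 p.2).1) :=
              mul_le_mul hfa hx hq0 (hf0 _)
            _ ≤ φ x := by
              have := hφ_ge x (x - (sel p.1 p.2).1)
              simpa using this
      · simp [hcond] at hx
    · exact hφ_nonneg x
  -- square integrability
  have hCf0 : 0 ≤ Cf := le_trans (hf0 0) (hCf 0)
  have hCg0 : 0 ≤ Cg := le_trans (hg0 0) (hCg 0)
  have hf2i : Integrable (fun x => f x ^ 2) := by
    refine (hfi.const_mul Cf).mono' ((hfm.pow_const 2).aestronglyMeasurable) ?_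
    refine ae_of_all _ fun x => ?_
    rw [Real.norm_eq_abs, abs_of_nonneg (sq_nonneg _)]
    calc f x ^ 2 = f x * f x := sq (f x)
      _ ≤ Cf * f x := mul_le_mul_of_nonneg_right (hCf x) (hf0 x)
  have hg2i : Integrable (fun x => g x ^ 2) := by
    refine (hgi.const_mul Cg).mono' ((hgm.pow_const 2).aestronglyMeasurable) ?_
    refine ae_of_all _ fun x => ?_
    rw [Real.norm_eq_abs, abs_of_nonneg (sq_nonneg _)]
    calc g x ^ 2 = g x * g x := sq (g x)
      _ ≤ Cg * g x := mul_le_mul_of_nonneg_right (hCg x) (hg0 x)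
  have layerf : ENNReal.ofReal (∫ x : ℝ, f x ^ 2) =
      ∫⁻ t in Set.Ioi (0:ℝ), volume {x : ℝ | t < f x ^ 2} := by
    rw [MeasureTheory.ofReal_integral_eq_lintegral_ofReal hf2i
      (ae_of_all _ fun x => sq_nonneg _)]
    exact lintegral_eq_lintegral_meas_lt _ (ae_of_all _ fun x => sq_nonneg _)
      ((hfm.pow_const 2).aemeasurable)
  have layerg : ENNReal.ofReal (∫ x : ℝ, g x ^ 2) =
      ∫⁻ t in Set.Ioi (0:ℝ), volume {x : ℝ | t < g x ^ 2} := by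
    rw [MeasureTheory.ofReal_integral_eq_lintegral_ofReal hg2i
      (ae_of_all _ fun x => sq_nonneg _)]
    exact lintegral_eq_lintegral_meas_lt _ (ae_of_all _ fun x => sq_nonneg _)
      ((hgm.pow_const 2).aemeasurable)
  have layerψ : ∫⁻ x, ENNReal.ofReal (ψ x) = ∫⁻ t in Set.Ioi (0:ℝ), volume {x : ℝ | t < ψ x} :=
    lintegral_eq_lintegral_meas_lt _ (ae_of_all _ hψ_nonneg) hψ_meas.aemeasurable
  have hmono : ∀ h : ℝ → ℝ, Antitone (fun t => volume {x : ℝ | t < h x}) := by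
    intro h t t' htt'
    exact measure_mono fun x hx => lt_of_le_of_lt htt' hx
  -- the key per-level inequality
  have keyt : ∀ t ∈ Set.Ioi (0:ℝ),
      volume {x : ℝ | t < f x ^ 2} + volume {x : ℝ | t < g x ^ 2} ≤
        volume {x : ℝ | t < ψ x} := by
    intro t ht
    simp only [Set.mem_Ioi] at ht
    by_cases htm : m ^ 2 ≤ t
    · have hf_empty : {x : ℝ | t < f x ^ 2} = ∅ := by
        ext x
        simp only [Set.mem_setOf_eq, Set.mem_empty_iff_false, iff_false, not_lt]
        exact le_trans (pow_le_pow_left₀ (hf0 x) (hfle x) 2) htm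
      have hg_empty : {x : ℝ | t < g x ^ 2} = ∅ := by
        ext x
        simp only [Set.mem_setOf_eq, Set.mem_empty_iff_false, iff_false, not_lt]
        exact le_trans (pow_le_pow_left₀ (hg0 x) (hgle x) 2) htm
      rw [hf_empty, hg_empty]
      simp
    · push_neg at htm
      set s := Real.sqrt t with hs
      have hs0 : 0 < s := Real.sqrt_pos.2 ht
      have hsm : s < m := (Real.sqrt_lt' hm).2 htm
      have hst : s ^ 2 = t := Real.sq_sqrt ht.le
      have hrepf : {x : ℝ | t < f x ^ 2} =
          ⋃ q : {q : ℚ // s < (q:ℝ) ∧ (q:ℝ) < m}, A q.1 := by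
        ext x
        simp only [Set.mem_iUnion, Set.mem_setOf_eq, hA]
        constructor
        · intro hx
          have hfx0 : 0 < f x := by nlinarith [hf0 x]
          have hfx : s < f x := (Real.sqrt_lt' hfx0).2 hx
          obtain ⟨q, hq1, hq2⟩ := exists_rat_btwn hfx
          exact ⟨⟨q, hq1, lt_of_lt_of_le hq2 (hfle x)⟩, hq2.le⟩
        · rintro ⟨⟨q, hq1, hq2⟩, hx⟩
          have hsf : s < f x := lt_of_lt_of_le hq1 hx
          nlinarith
      have hrepg : {x : ℝ | t < g x ^ 2} =
          ⋃ q : {q : ℚ // s < (q:ℝ) ∧ (q:ℝ) < m}, B q.1 := by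
        ext x
        simp only [Set.mem_iUnion, Set.mem_setOf_eq, hB]
        constructor
        · intro hx
          have hgx0 : 0 < g x := by nlinarith [hg0 x]
          have hgx : s < g x := (Real.sqrt_lt' hgx0).2 hx
          obtain ⟨q, hq1, hq2⟩ := exists_rat_btwn hgx
          exact ⟨⟨q, hq1, lt_of_lt_of_le hq2 (hgle x)⟩, hq2.le⟩
        · rintro ⟨⟨q, hq1, hq2⟩, hx⟩
          have hsg : s < g x := lt_of_lt_of_le hq1 hx
          nlinarith
      have hminmem : ∀ q1 q2 : {q : ℚ // s < (q:ℝ) ∧ (q:ℝ) < m},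
          s < ((min q1.1 q2.1 : ℚ) : ℝ) ∧ ((min q1.1 q2.1 : ℚ) : ℝ) < m := by
        intro q1 q2
        constructor
        · push_cast
          exact lt_min q1.2.1 q2.2.1
        · push_cast
          exact lt_of_le_of_lt (min_le_left _ _) q1.2.2
      have hAanti : ∀ q1 q2 : ℚ, q1 ≤ q2 → A q2 ⊆ A q1 := by
        intro q1 q2 h12 x hx
        have hx' : (q2:ℝ) ≤ f x := hx
        show (q1:ℝ) ≤ f x
        exact le_trans (by exact_mod_cast h12) hx'
      have hBanti : ∀ q1 q2 : ℚ, q1 ≤ q2 → B q2 ⊆ B q1 := by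
        intro q1 q2 h12 x hx
        have hx' : (q2:ℝ) ≤ g x := hx
        show (q1:ℝ) ≤ g x
        exact le_trans (by exact_mod_cast h12) hx'
      have hdirA : Directed (· ⊆ ·)
          (fun q : {q : ℚ // s < (q:ℝ) ∧ (q:ℝ) < m} => A q.1) := by
        intro q1 q2
        refine ⟨⟨min q1.1 q2.1, hminmem q1 q2⟩, ?_, ?_⟩
        · exact hAanti _ _ (min_le_left _ _)
        · exact hAanti _ _ (min_le_right _ _)
      have hdirB : Directed (· ⊆ ·)
          (fun q : {q : ℚ // s < (q:ℝ) ∧ (q:ℝ) < m} => B q.1) := by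
        intro q1 q2
        refine ⟨⟨min q1.1 q2.1, hminmem q1 q2⟩, ?_, ?_⟩
        · exact hBanti _ _ (min_le_left _ _)
        · exact hBanti _ _ (min_le_right _ _)
      rw [hrepf, hrepg, hdirA.measure_iUnion, hdirB.measure_iUnion]
      obtain ⟨q0, hq01, hq02⟩ := exists_rat_btwn hsm
      have : Nonempty {q : ℚ // s < (q:ℝ) ∧ (q:ℝ) < m} := ⟨⟨q0, hq01, hq02⟩⟩
      have mainbound : ∀ q : ℚ, s < (q:ℝ) → (q:ℝ) < m →
          volume (A q) + volume (B q) ≤ volume {x : ℝ | t < ψ x} := ?_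
      case _ =>
        refine ENNReal.iSup_add_iSup_le fun i j => ?_
        refine le_trans (add_le_add (measure_mono (hAanti _ _ (min_le_left i.1 j.1)))
          (measure_mono (hBanti _ _ (min_le_right i.1 j.1)))) ?_
        exact mainbound (min i.1 j.1) (hminmem i j).1 (hminmem i j).2
      intro q hq1 hq2
      have hq0 : 0 < q := by
        have : (0:ℝ) < (q:ℝ) := lt_trans hs0 hq1
        exact_mod_cast this
      have hcond : 0 < q ∧ ((q:ℝ)) < m := ⟨hq0, hq2⟩
      refine ENNReal.le_of_forall_pos_le_add fun ε hε _ => ?_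
      have hε' : (0:ℝ) < (ε:ℝ) := hε
      obtain ⟨n, hn⟩ := exists_nat_gt (2 / (ε:ℝ))
      have hn1 : (0:ℝ) < (n:ℝ) + 1 := by positivity
      have hδ : 2 / ((n:ℝ) + 1) < (ε:ℝ) := by
        rw [div_lt_iff₀ hn1]
        have h2 : 2 < (ε:ℝ) * ((n:ℝ) + 1) := by
          have := (div_lt_iff₀ hε').mp (hn.trans (lt_add_one (n:ℝ)))
          linarith [this]
        linarith
      obtain ⟨hfa, hgb, ha, hb⟩ := hsel q n hcond
      set a := (sel q n).1 with ha'
      set b := (sel q n).2 with hb'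
      set D1 := {x : ℝ | ((q:ℝ)) ≤ f (x - b)} with hD1
      set D2 := {x : ℝ | ((q:ℝ)) ≤ g (x - a)} with hD2
      have hCq : C (q, n) = D1 ∪ D2 := by
        simp only [hC]
        rw [if_pos hcond]
      have hD2meas : MeasurableSet D2 :=
        measurableSet_le measurable_const (hgm.comp (measurable_sub_const _))
      have hvolD1 : volume D1 = volume (A q) := by
        have : D1 = (fun x => x + (-b)) ⁻¹' (A q) := by
          ext x
          simp [hD1, hA, sub_eq_add_neg]
        rw [this, measure_preimage_add_right]
      have hvolD2 : volume D2 = volume (B q) := by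
        have : D2 = (fun x => x + (-a)) ⁻¹' (B q) := by
          ext x
          simp [hD2, hB, sub_eq_add_neg]
        rw [this, measure_preimage_add_right]
      have hsub : D1 ∪ D2 ⊆ {x : ℝ | t < ψ x} := by
        intro x hx
        have hx' : x ∈ C (q, n) := by rw [hCq]; exact hx
        have hle : ((q:ℝ)) ^ 2 ≤ ψ x := by
          calc ((q:ℝ))^2 = (C (q,n)).indicator (fun _ => ((q:ℝ))^2) x :=
                (Set.indicator_of_mem hx' (fun _ => ((q:ℝ))^2)).symm
            _ ≤ ψ x := le_ciSup (hψbdd x) ((q, n) : ℚ × ℕ)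
        have hts : t < ((q:ℝ))^2 := by nlinarith
        exact lt_of_lt_of_le hts hle
      have hinter : volume (D1 ∩ D2) ≤ (ε : ℝ≥0∞) := by
        have hsub2 : D1 ∩ D2 ⊆ Set.Icc (sInf (B q) + a) (sSup (A q) + b) := by
          rintro x ⟨hx1, hx2⟩
          constructor
          · have : sInf (B q) ≤ x - a := csInf_le (hBbdd q hcond.1) hx2
            linarith
          · have : x - b ≤ sSup (A q) := le_csSup (hAbdd q hcond.1) hx1
            linarith
        have h2δ : (1:ℝ)/((n:ℝ)+1) + 1/((n:ℝ)+1) = 2/((n:ℝ)+1) := by ring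
        calc volume (D1 ∩ D2) ≤ volume (Set.Icc (sInf (B q) + a) (sSup (A q) + b)) :=
              measure_mono hsub2
          _ = ENNReal.ofReal (sSup (A q) + b - (sInf (B q) + a)) := Real.volume_Icc
          _ ≤ ENNReal.ofReal ((ε:ℝ)) := ENNReal.ofReal_le_ofReal (by linarith)
          _ = (ε : ℝ≥0∞) := ENNReal.ofReal_coe_nnreal
      calc volume (A q) + volume (B q) = volume D1 + volume D2 := by
            rw [hvolD1, hvolD2]
        _ = volume (D1 ∪ D2) + volume (D1 ∩ D2) := (measure_union_add_inter D1 hD2meas).symm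
        _ ≤ volume {x : ℝ | t < ψ x} + (ε : ℝ≥0∞) :=
            add_le_add (measure_mono hsub) hinter
  calc ENNReal.ofReal (∫ x : ℝ, f x ^ 2) + ENNReal.ofReal (∫ x : ℝ, g x ^ 2)
      = (∫⁻ t in Set.Ioi (0:ℝ), volume {x : ℝ | t < f x ^ 2}) +
          ∫⁻ t in Set.Ioi (0:ℝ), volume {x : ℝ | t < g x ^ 2} := by rw [layerf, layerg]
    _ = ∫⁻ t in Set.Ioi (0:ℝ),
          (volume {x : ℝ | t < f x ^ 2} + volume {x : ℝ | t < g x ^ 2}) :=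
        (lintegral_add_left ((hmono _).measurable) _).symm
    _ ≤ ∫⁻ t in Set.Ioi (0:ℝ), volume {x : ℝ | t < ψ x} :=
        setLIntegral_mono (hmono ψ).measurable keyt
    _ = ∫⁻ x, ENNReal.ofReal (ψ x) := layerψ.symm
    _ ≤ ∫⁻ x : ℝ, ENNReal.ofReal (φ x) :=
        lintegral_mono fun x => ENNReal.ofReal_le_ofReal (hψ_le x)

theorem prekopa_leindler_one_dim
    (f g : ℝ → ℝ) (hf0 : ∀ x, 0 ≤ f x) (hg0 : ∀ x, 0 ≤ g x)
    (hfi : Integrable f) (hgi : Integrable g)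
    (hfm : Measurable f) (hgm : Measurable g)
    (hfb : ∃ C, ∀ x, f x ≤ C) (hgb : ∃ C, ∀ x, g x ≤ C)
    (hfs : HasCompactSupport f) (hgs : HasCompactSupport g) :
    (∫⁻ x : ℝ, ENNReal.ofReal (⨆ y : ℝ, f (x - y) * g y)) ≥
      ENNReal.ofReal (2 * Real.sqrt (∫ x : ℝ, f x ^ 2) *
        Real.sqrt (∫ x : ℝ, g x ^ 2)) := by
  classical
  obtain ⟨Cf, hCf⟩ := hfb
  obtain ⟨Cg, hCg⟩ := hgb
  have hbddf : BddAbove (Set.range f) := ⟨Cf, by rintro _ ⟨x, rfl⟩; exact hCf x⟩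
  have hbddg : BddAbove (Set.range g) := ⟨Cg, by rintro _ ⟨x, rfl⟩; exact hCg x⟩
  have hintf2 : 0 ≤ ∫ x : ℝ, f x ^ 2 := integral_nonneg fun x => sq_nonneg _
  have hintg2 : 0 ≤ ∫ x : ℝ, g x ^ 2 := integral_nonneg fun x => sq_nonneg _
  set a := ⨆ x, f x with ha
  set b := ⨆ x, g x with hb
  by_cases hapos : 0 < a
  swap
  · have hf0' : ∀ x, f x = 0 :=
      fun x => le_antisymm (le_trans (le_ciSup hbddf x) (not_lt.1 hapos)) (hf0 x)
    have hz : (∫ x : ℝ, f x ^ 2) = 0 := by simp [hf0']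
    rw [ge_iff_le, hz]
    simp
  by_cases hbpos : 0 < b
  swap
  · have hg0' : ∀ x, g x = 0 :=
      fun x => le_antisymm (le_trans (le_ciSup hbddg x) (not_lt.1 hbpos)) (hg0 x)
    have hz : (∫ x : ℝ, g x ^ 2) = 0 := by simp [hg0']
    rw [ge_iff_le, hz]
    simp
  set c := Real.sqrt (b / a) with hc
  have hc0 : 0 < c := Real.sqrt_pos.2 (div_pos hbpos hapos)
  have hc2 : c ^ 2 = b / a := Real.sq_sqrt (div_pos hbpos hapos).le
  set F : ℝ → ℝ := fun x => c * f x with hF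
  set G : ℝ → ℝ := fun x => c⁻¹ * g x with hG
  have hF0 : ∀ x, 0 ≤ F x := fun x => mul_nonneg hc0.le (hf0 x)
  have hG0 : ∀ x, 0 ≤ G x := fun x => mul_nonneg (inv_nonneg.2 hc0.le) (hg0 x)
  have hFi : Integrable F := hfi.const_mul c
  have hGi : Integrable G := hgi.const_mul c⁻¹
  have hFm : Measurable F := hfm.const_mul c
  have hGm : Measurable G := hgm.const_mul c⁻¹
  have hFb : ∃ C, ∀ x, F x ≤ C :=
    ⟨c * Cf, fun x => mul_le_mul_of_nonneg_left (hCf x) hc0.le⟩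
  have hGb : ∃ C, ∀ x, G x ≤ C :=
    ⟨c⁻¹ * Cg, fun x => mul_le_mul_of_nonneg_left (hCg x) (inv_nonneg.2 hc0.le)⟩
  have hFs : HasCompactSupport F := by
    have : F = (fun _ => c) * f := rfl
    rw [this]
    exact hfs.mul_left
  have hGs : HasCompactSupport G := by
    have : G = (fun _ => c⁻¹) * g := rfl
    rw [this]
    exact hgs.mul_left
  have hFsup : (⨆ x, F x) = c * a := (Real.mul_iSup_of_nonneg hc0.le f).symm
  have hGsup : (⨆ x, G x) = c⁻¹ * b := (Real.mul_iSup_of_nonneg (inv_nonneg.2 hc0.le) g).symm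
  have hca : c ^ 2 * a = b := by
    rw [hc2]
    field_simp
  have hGsup' : (⨆ x, G x) = c * a := by
    rw [hGsup, ← hca]
    field_simp
  have hm : 0 < c * a := mul_pos hc0 hapos
  have key := pl_key F G hF0 hG0 hFi hGi hFm hGm hFb hGb hFs hGs (c * a) hm hFsup hGsup'
  have hconv_eq : ∀ x : ℝ, (⨆ y, F (x - y) * G y) = ⨆ y, f (x - y) * g y := by
    intro x
    refine iSup_congr fun y => ?_
    simp only [hF, hG]
    rw [mul_mul_mul_comm, mul_inv_cancel₀ hc0.ne', one_mul]
  simp only [hconv_eq] at key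
  rw [ge_iff_le]
  refine le_trans ?_ key
  have hF2 : (∫ x : ℝ, F x ^ 2) = c ^ 2 * ∫ x : ℝ, f x ^ 2 := by
    simp only [hF, mul_pow]
    exact integral_const_mul _ _
  have hG2 : (∫ x : ℝ, G x ^ 2) = (c⁻¹) ^ 2 * ∫ x : ℝ, g x ^ 2 := by
    simp only [hG, mul_pow]
    exact integral_const_mul _ _
  have hF2nn : 0 ≤ ∫ x : ℝ, F x ^ 2 := integral_nonneg fun x => sq_nonneg _
  have hG2nn : 0 ≤ ∫ x : ℝ, G x ^ 2 := integral_nonneg fun x => sq_nonneg _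
  rw [← ENNReal.ofReal_add hF2nn hG2nn]
  apply ENNReal.ofReal_le_ofReal
  set u := c * Real.sqrt (∫ x : ℝ, f x ^ 2) with hu
  set v := c⁻¹ * Real.sqrt (∫ x : ℝ, g x ^ 2) with hv
  have hu2 : u ^ 2 = ∫ x : ℝ, F x ^ 2 := by
    rw [hu, hF2, mul_pow, Real.sq_sqrt hintf2]
  have hv2 : v ^ 2 = ∫ x : ℝ, G x ^ 2 := by
    rw [hv, hG2, mul_pow, Real.sq_sqrt hintg2]
  calc 2 * Real.sqrt (∫ x : ℝ, f x ^ 2) * Real.sqrt (∫ x : ℝ, g x ^ 2)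
      = 2 * u * v := by
        rw [hu, hv]
        field_simp
    _ ≤ u ^ 2 + v ^ 2 := two_mul_le_add_sq u v
    _ = (∫ x : ℝ, F x ^ 2) + ∫ x : ℝ, G x ^ 2 := by rw [hu2, hv2]
end

section
/- Let λ ∈ ℝ, let a, b : ℤ → [0,∞) be finitely supported, and define f(x) := e^{λ{x}} a(⌊x⌋), g(y) := e^{λ{y}} b(⌊y⌋). Then for every n ∈ ℤ and t ∈ [0,1), one has (f ⊛ g)(n + t) ≤ e^{λ t} · max((a ⊛ b)(n), e^{λ} · (a ⊛ b)(n−1)), where ⊛ denotes max-convolution (on ℝ for f, g and on ℤ for a, b). -/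
lemma bdd_aux (c : ℤ → ℝ) (hc : (Function.support c).Finite) :
    BddAbove (Set.range c) := by
  have hsub : Set.range c ⊆ insert 0 (c '' Function.support c) := by
    rintro x ⟨m, rfl⟩
    by_cases h : c m = 0
    · exact Set.mem_insert_iff.2 (Or.inl h)
    · exact Set.mem_insert_iff.2 (Or.inr ⟨m, h, rfl⟩)
  exact (((hc.image c).insert 0).bddAbove).mono hsub

theorem maxconv_step_bound
    (lam : ℝ) (a b : ℤ → ℝ) (ha : ∀ n, 0 ≤ a n) (hb : ∀ n, 0 ≤ b n)
    (hsa : (Function.support a).Finite) (hsb : (Function.support b).Finite)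
    (f g : ℝ → ℝ)
    (hf : ∀ x, f x = Real.exp (lam * Int.fract x) * a ⌊x⌋)
    (hg : ∀ y, g y = Real.exp (lam * Int.fract y) * b ⌊y⌋)
    (n : ℤ) (t : ℝ) (ht0 : 0 ≤ t) (ht1 : t < 1) :
    (⨆ y : ℝ, f ((n : ℝ) + t - y) * g y) ≤
      Real.exp (lam * t) * max (⨆ m : ℤ, a (n - m) * b m)
        (Real.exp lam * ⨆ m : ℤ, a (n - 1 - m) * b m) := by
  have bdd : ∀ k : ℤ, BddAbove (Set.range fun m : ℤ => a (k - m) * b m) := by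
    intro k
    apply bdd_aux
    apply hsb.subset
    intro m hm
    simp only [Function.mem_support] at hm ⊢
    intro h
    exact hm (by rw [h, mul_zero])
  set S0 := ⨆ m : ℤ, a (n - m) * b m with hS0
  set S1 := ⨆ m : ℤ, a (n - 1 - m) * b m with hS1
  have hRHS : 0 ≤ Real.exp (lam * t) * max S0 (Real.exp lam * S1) := by
    have h0 : (0:ℝ) ≤ S0 :=
      le_trans (mul_nonneg (ha _) (hb 0)) (le_ciSup (bdd n) 0)
    exact mul_nonneg (Real.exp_pos _).le (le_trans h0 (le_max_left _ _))
  apply Real.iSup_le _ hRHS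
  intro y
  set x := (n : ℝ) + t - y with hx
  rw [hf, hg]
  set p := ⌊x⌋ with hp
  set q := ⌊y⌋ with hq
  have hsum : Int.fract x + Int.fract y = t + ((n - p - q : ℤ) : ℝ) := by
    have : x + y = (n : ℝ) + t := by rw [hx]; ring
    simp only [Int.fract]
    push_cast
    linarith [this]
  set d : ℤ := n - p - q with hd
  have hfx0 := Int.fract_nonneg x
  have hfy0 := Int.fract_nonneg y
  have hfx1 := Int.fract_lt_one x
  have hfy1 := Int.fract_lt_one y
  have hd0 : (-1 : ℝ) < (d : ℝ) := by
    have : (d : ℝ) = Int.fract x + Int.fract y - t := by linarith [hsum]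
    linarith
  have hd2 : (d : ℝ) < 2 := by
    have : (d : ℝ) = Int.fract x + Int.fract y - t := by linarith [hsum]
    linarith
  have hd01 : d = 0 ∨ d = 1 := by
    have h1 : (-1 : ℤ) < d := by exact_mod_cast hd0
    have h2 : d < 2 := by exact_mod_cast hd2
    omega
  have key : Real.exp (lam * Int.fract x) * a p * (Real.exp (lam * Int.fract y) * b q)
      = Real.exp (lam * (Int.fract x + Int.fract y)) * (a p * b q) := by
    rw [mul_add, Real.exp_add]; ring
  rw [key]
  rcases hd01 with h | h
  · have hq' : p = n - q := by omega
    have hsum' : Int.fract x + Int.fract y = t := by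
      have h' : (d : ℝ) = 0 := by exact_mod_cast h
      linarith [hsum]
    rw [hsum', hq']
    have hle : a (n - q) * b q ≤ S0 := le_ciSup (bdd n) q
    calc Real.exp (lam * t) * (a (n - q) * b q)
        ≤ Real.exp (lam * t) * S0 :=
          mul_le_mul_of_nonneg_left hle (Real.exp_pos _).le
      _ ≤ Real.exp (lam * t) * max S0 (Real.exp lam * S1) :=
          mul_le_mul_of_nonneg_left (le_max_left _ _) (Real.exp_pos _).le
  · have hq' : p = n - 1 - q := by omega
    have hsum' : Int.fract x + Int.fract y = t + 1 := by
      have h' : (d : ℝ) = 1 := by exact_mod_cast h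
      linarith [hsum]
    rw [hsum', hq']
    have hle : a (n - 1 - q) * b q ≤ S1 := le_ciSup (bdd (n - 1)) q
    have hexp : Real.exp (lam * (t + 1)) = Real.exp (lam * t) * Real.exp lam := by
      rw [← Real.exp_add]; ring_nf
    calc Real.exp (lam * (t + 1)) * (a (n - 1 - q) * b q)
        ≤ Real.exp (lam * (t + 1)) * S1 :=
          mul_le_mul_of_nonneg_left hle (Real.exp_pos _).le
      _ = Real.exp (lam * t) * (Real.exp lam * S1) := by rw [hexp]; ring
      _ ≤ Real.exp (lam * t) * max S0 (Real.exp lam * S1) :=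
          mul_le_mul_of_nonneg_left (le_max_right _ _) (Real.exp_pos _).le
end

section
/- Let A, B ⊆ ℤ^d be finite nonempty sets and let U = {0,1}^d ⊆ ℤ^d be the standard discrete cube. Then |A + B + U| ≥ 2^d · |A|^{1/2} · |B|^{1/2}. -/
/-!
Induct on `d`, writing `ℤ^(d+1) = ℤ × ℤ^d` and slicing `A`, `B`, `S = A + B + U` into fibres
`A_i`, `B_j`, `S_k` over the first coordinate. The fibre `S_(i+j+ε)`, `ε ∈ {0, 1}`, contains
`A_i + B_j + {0,1}^d`, so by induction `|S_(i+j+ε)| ≥ 2^d √|A_i| √|B_j|`. A one-dimensional discrete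
Prékopa–Leindler inequality then gives `|S| = ∑ |S_k| ≥ 2 · 2^d √|A| √|B|`.

That inequality is proved level by level: after rescaling the weights `a_i², b_j²` so that their
maxima agree, a superlevel set of `c` contains `X + Y + {0, 1}` for the superlevel sets `X`, `Y` of
the weights, hence has at least `|X| + |Y|` elements (Cauchy–Davenport in `ℤ`); summing over the
levels and AM–GM conclude.
-/

open scoped Pointwise

open Finset

theorem card_add_card_le_card_add_add_zero_one {X Y : Finset ℤ} (hX : X.Nonempty)
    (hY : Y.Nonempty) : #X + #Y ≤ #(X + Y + {0, 1}) := by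
  have hXY := cauchy_davenport_add_of_linearOrder_isCancelAdd hX hY
  have h := cauchy_davenport_add_of_linearOrder_isCancelAdd (hX.add hY)
    (insert_nonempty 0 {1})
  rw [card_pair zero_ne_one] at h
  have hX_pos := hX.card_pos
  omega

theorem two_mul_sqrt_mul_sqrt_le {t u v : ℝ} (ht : 0 < t) (hu : 0 ≤ u) (hv : 0 ≤ v) :
    2 * √u * √v ≤ t * u + v / t := by
  have key : 0 ≤ (t * √u - √v) ^ 2 / t := by positivity
  rw [sub_sq, mul_pow, Real.sq_sqrt hu, Real.sq_sqrt hv] at key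
  field_simp at key ⊢
  nlinarith

theorem sum_le_sum_of_card_superlevel_le {ι κ : Type*} [DecidableEq ι] [DecidableEq κ]
    {P : Finset ι} {W : Finset κ} {f : ι → ℝ} {g : κ → ℝ} (hg : ∀ k ∈ W, 0 ≤ g k)
    (h : ∀ p ∈ P, #{q ∈ P | f p ≤ f q} ≤ #{k ∈ W | f p ≤ g k}) :
    ∑ p ∈ P, f p ≤ ∑ k ∈ W, g k := by
  induction P using Finset.induction_on_max_value f generalizing W with
  | empty => simpa using sum_nonneg hg
  | insert a s ha hmax ih =>
    have hle_a : ∀ p ∈ insert a s, f p ≤ f a := by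
      simpa using hmax
    have hcard : ∀ p ∈ insert a s, #{q ∈ s | f p ≤ f q} + 1 ≤ #{k ∈ W | f p ≤ g k} := by
      intro p hp
      simpa [filter_insert, hle_a p hp, card_insert_of_notMem, ha] using h p hp
    obtain ⟨k, hk⟩ : {k ∈ W | f a ≤ g k}.Nonempty :=
      card_pos.1 <| (Nat.succ_pos _).trans_le (hcard a (mem_insert_self a s))
    obtain ⟨k₀, hk₀, hk₀max⟩ := W.exists_max_image g ⟨k, (mem_filter.1 hk).1⟩
    have hak₀ : f a ≤ g k₀ := (mem_filter.1 hk).2.trans (hk₀max k (mem_filter.1 hk).1)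
    have hrest : ∑ p ∈ s, f p ≤ ∑ k ∈ W.erase k₀, g k := by
      refine ih (fun k hk => hg k (mem_of_mem_erase hk)) fun p hp => ?_
      have hk₀p : k₀ ∈ {k ∈ W | f p ≤ g k} :=
        mem_filter.2 ⟨hk₀, (hle_a p (mem_insert_of_mem hp)).trans hak₀⟩
      rw [filter_erase, card_erase_of_mem hk₀p]
      have := hcard p (mem_insert_of_mem hp)
      omega
    rw [sum_insert ha, ← add_sum_erase W g hk₀]
    exact add_le_add hak₀ hrest

section PrekopaLeindler

variable {I J : Finset ℤ} {a b c : ℤ → ℝ}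

theorem card_superlevel_add_card_superlevel_le (ha : ∀ i ∈ I, 0 ≤ a i) (hb : ∀ j ∈ J, 0 ≤ b j)
    (habc : ∀ i ∈ I, ∀ j ∈ J, ∀ ε ∈ ({0, 1} : Finset ℤ), a i * b j ≤ c (i + j + ε))
    {t s : ℝ} (ht : 0 < t) (hs : 0 ≤ s) (hI : ∃ i ∈ I, s ≤ t * a i ^ 2)
    (hJ : ∃ j ∈ J, s ≤ b j ^ 2 / t) :
    #{i ∈ I | s ≤ t * a i ^ 2} + #{j ∈ J | s ≤ b j ^ 2 / t} ≤
      #{k ∈ I + J + {0, 1} | s ≤ c k} := by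
  refine (card_add_card_le_card_add_add_zero_one (by simpa [Finset.Nonempty] using hI)
    (by simpa [Finset.Nonempty] using hJ)).trans (card_le_card ?_)
  intro k hk
  obtain ⟨_, hx, ε, hε, rfl⟩ := mem_add.1 hk
  obtain ⟨i, hi, j, hj, rfl⟩ := mem_add.1 hx
  rw [mem_filter] at hi hj ⊢
  have hsq : s * s ≤ (a i * b j) * (a i * b j) :=
    calc s * s ≤ (t * a i ^ 2) * (b j ^ 2 / t) := mul_le_mul hi.2 hj.2 hs (by positivity)
      _ = (a i * b j) * (a i * b j) := by field_simp
  have hab : s ≤ a i * b j :=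
    (mul_self_le_mul_self_iff hs (mul_nonneg (ha i hi.1) (hb j hj.1))).2 hsq
  exact ⟨add_mem_add (add_mem_add hi.1 hj.1) hε, hab.trans (habc i hi.1 j hj.1 ε hε)⟩

theorem discrete_prekopa_leindler (hI : I.Nonempty) (hJ : J.Nonempty) (ha : ∀ i ∈ I, 0 < a i)
    (hb : ∀ j ∈ J, 0 < b j) (hc : 0 ≤ c)
    (habc : ∀ i ∈ I, ∀ j ∈ J, ∀ ε ∈ ({0, 1} : Finset ℤ), a i * b j ≤ c (i + j + ε)) :
    2 * √(∑ i ∈ I, a i ^ 2) * √(∑ j ∈ J, b j ^ 2) ≤ ∑ k ∈ I + J + {0, 1}, c k := by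
  obtain ⟨i₀, hi₀, hi₀max⟩ := I.exists_max_image a hI
  obtain ⟨j₀, hj₀, hj₀max⟩ := J.exists_max_image b hJ
  have ha₀ := ha i₀ hi₀
  have hb₀ := hb j₀ hj₀
  set t := b j₀ / a i₀ with ht_def
  have ht : 0 < t := div_pos hb₀ ha₀
  have hti₀ : t * a i₀ ^ 2 = a i₀ * b j₀ := by rw [ht_def]; field_simp
  have htj₀ : b j₀ ^ 2 / t = a i₀ * b j₀ := by rw [ht_def]; field_simp
  -- after rescaling by `t`, both weight families peak at `a i₀ * b j₀`, so every level of `τ`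
  -- meets both `I` and `J`
  set τ : ℤ ⊕ ℤ → ℝ := Sum.elim (fun i => t * a i ^ 2) (fun j => b j ^ 2 / t)
  have hτ : ∀ p ∈ I.disjSum J, 0 ≤ τ p ∧ τ p ≤ a i₀ * b j₀ := by
    rintro (i | j) hp <;> simp only [inl_mem_disjSum, inr_mem_disjSum] at hp
    · show 0 ≤ t * a i ^ 2 ∧ t * a i ^ 2 ≤ _
      refine ⟨by positivity, hti₀ ▸ ?_⟩
      gcongr
      exacts [(ha i hp).le, hi₀max i hp]
    · show 0 ≤ b j ^ 2 / t ∧ b j ^ 2 / t ≤ _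
      refine ⟨by positivity, htj₀ ▸ ?_⟩
      gcongr
      exacts [(hb j hp).le, hj₀max j hp]
  have hlevel : ∀ p ∈ I.disjSum J,
      #{q ∈ I.disjSum J | τ p ≤ τ q} ≤ #{k ∈ I + J + {0, 1} | τ p ≤ c k} := by
    intro p hp
    rw [card_filter, sum_disjSum, ← card_filter, ← card_filter]
    exact card_superlevel_add_card_superlevel_le (fun i hi => (ha i hi).le)
      (fun j hj => (hb j hj).le) habc ht (hτ p hp).1
      ⟨i₀, hi₀, hti₀ ▸ (hτ p hp).2⟩ ⟨j₀, hj₀, htj₀ ▸ (hτ p hp).2⟩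
  calc 2 * √(∑ i ∈ I, a i ^ 2) * √(∑ j ∈ J, b j ^ 2)
      ≤ t * ∑ i ∈ I, a i ^ 2 + (∑ j ∈ J, b j ^ 2) / t :=
        two_mul_sqrt_mul_sqrt_le ht (sum_nonneg fun _ _ => sq_nonneg _)
          (sum_nonneg fun _ _ => sq_nonneg _)
    _ = ∑ p ∈ I.disjSum J, τ p := by simp [τ, sum_disjSum, mul_sum, sum_div]
    _ ≤ ∑ k ∈ I + J + {0, 1}, c k := sum_le_sum_of_card_superlevel_le (fun k _ => hc k) hlevel

end PrekopaLeindler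

namespace Finset

variable {α G : Type*} [DecidableEq α] [DecidableEq G]

def fiber (C : Finset (α × G)) (i : α) : Finset G := {p ∈ C | p.1 = i}.image Prod.snd

@[simp]
theorem mem_fiber {C : Finset (α × G)} {i : α} {x : G} : x ∈ C.fiber i ↔ (i, x) ∈ C := by
  simp [fiber]

theorem fiber_nonempty {C : Finset (α × G)} {i : α} (hi : i ∈ C.image Prod.fst) :
    (C.fiber i).Nonempty := by
  obtain ⟨⟨_, x⟩, hx, rfl⟩ := mem_image.1 hi
  exact ⟨x, mem_fiber.2 hx⟩

theorem sum_card_fiber (C : Finset (α × G)) : ∑ i ∈ C.image Prod.fst, #(C.fiber i) = #C := by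
  rw [card_eq_sum_card_image Prod.fst C]
  exact sum_congr rfl fun i _ => card_image_of_injOn fun p hp q hq h =>
    Prod.ext ((mem_filter.1 hp).2.trans (mem_filter.1 hq).2.symm) h

theorem fiber_product {s : Finset α} {i : α} (hi : i ∈ s) (V : Finset G) :
    (s ×ˢ V).fiber i = V := by
  ext; simp [hi]

theorem add_fiber_subset_fiber_add [Add α] [Add G] (C D : Finset (α × G)) (i j : α) :
    C.fiber i + D.fiber j ⊆ (C + D).fiber (i + j) := by
  intro z hz
  obtain ⟨x, hx, y, hy, rfl⟩ := mem_add.1 hz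
  exact mem_fiber.2 (add_mem_add (mem_fiber.1 hx) (mem_fiber.1 hy) : (i, x) + (j, y) ∈ C + D)

end Finset

def HasSqrtSumsetBound {G : Type*} [AddCommGroup G] [DecidableEq G] (V : Finset G) (K : ℝ) :
    Prop :=
  ∀ A B : Finset G, A.Nonempty → B.Nonempty → K * √(#A : ℝ) * √(#B : ℝ) ≤ #(A + B + V)

namespace HasSqrtSumsetBound

variable {G H : Type*} [AddCommGroup G] [DecidableEq G] [AddCommGroup H] [DecidableEq H]
  {V : Finset G} {K : ℝ}

theorem one (hV : V.Nonempty) : HasSqrtSumsetBound V 1 := by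
  intro A B hA hB
  have hAS : #A ≤ #(A + B + V) := by
    rw [add_assoc]; exact card_le_card_add_right (hB.add hV)
  have hBS : #B ≤ #(A + B + V) := by
    rw [add_comm A, add_assoc]; exact card_le_card_add_right (hA.add hV)
  rw [one_mul, ← Real.sqrt_mul (Nat.cast_nonneg _)]
  calc √(#A * #B) ≤ √(#(A + B + V) * #(A + B + V)) := by gcongr
    _ = #(A + B + V) := Real.sqrt_mul_self (Nat.cast_nonneg _)

theorem image_addEquiv (h : HasSqrtSumsetBound V K) (e : G ≃+ H) :
    HasSqrtSumsetBound (V.image e) K := by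
  intro A B hA hB
  have hcard : ∀ C : Finset H, #(C.image e.symm) = #C :=
    fun C => card_image_of_injective C e.symm.injective
  have h' := h (A.image e.symm) (B.image e.symm) (hA.image _) (hB.image _)
  rwa [hcard, hcard, ← card_image_of_injective _ e.injective, image_add, image_add,
    image_image, image_image, e.self_comp_symm, image_id, image_id] at h'

theorem zero_one_prod (hK : 0 < K) (hV : V.Nonempty) (h : HasSqrtSumsetBound V K) :
    HasSqrtSumsetBound (({0, 1} : Finset ℤ) ×ˢ V) (2 * K) := by
  intro A B hA hB
  set S := A + B + ({0, 1} : Finset ℤ) ×ˢ V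
  have hS : S.image Prod.fst = A.image Prod.fst + B.image Prod.fst + {0, 1} := by
    rw [← AddMonoidHom.coe_fst, image_add, image_add, AddMonoidHom.coe_fst, product_image_fst hV]
  have hfiber : ∀ i ∈ A.image Prod.fst, ∀ j ∈ B.image Prod.fst, ∀ ε ∈ ({0, 1} : Finset ℤ),
      K * √(#(A.fiber i) : ℝ) * √(#(B.fiber j) : ℝ) ≤ #(S.fiber (i + j + ε)) := by
    intro i hi j hj ε hε
    refine (h _ _ (fiber_nonempty hi) (fiber_nonempty hj)).trans (Nat.cast_le.2 (card_le_card ?_))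
    rw [← fiber_product hε V]
    exact (add_subset_add_right (add_fiber_subset_fiber_add A B i j)).trans
      (add_fiber_subset_fiber_add _ _ _ _)
  have key := discrete_prekopa_leindler (hA.image Prod.fst) (hB.image Prod.fst)
    (a := fun i => K * √(#(A.fiber i) : ℝ)) (b := fun j => √(#(B.fiber j) : ℝ))
    (c := fun k => #(S.fiber k))
    (fun i hi => by have := (fiber_nonempty hi).card_pos; positivity)
    (fun j hj => by have := (fiber_nonempty hj).card_pos; positivity)
    (fun _ => Nat.cast_nonneg _) hfiber
  rw [← hS] at key
  simp_rw [mul_pow, Real.sq_sqrt (Nat.cast_nonneg _), ← mul_sum, ← Nat.cast_sum,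
    sum_card_fiber, Real.sqrt_mul (sq_nonneg K), Real.sqrt_sq hK.le] at key
  linarith

end HasSqrtSumsetBound

theorem piFinset_const_succ_eq_image_cons {R : Type*} [AddCommMonoid R] [DecidableEq R]
    (s : Finset R) (d : ℕ) :
    Fintype.piFinset (fun _ : Fin (d + 1) => s) =
      (s ×ˢ Fintype.piFinset fun _ : Fin d => s).image
        (Fin.consLinearEquiv ℕ fun _ => R).toAddEquiv := by
  ext f
  constructor
  · intro hf
    exact mem_image.2 ⟨(f 0, Fin.tail f), mem_product.2 (Fin.mem_piFinset_iff_zero_tail.1 hf),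
      Fin.cons_self_tail f⟩
  · intro hf
    obtain ⟨⟨x, g⟩, hxg, rfl⟩ := mem_image.1 hf
    obtain ⟨hx, hg⟩ := mem_product.1 hxg
    exact Fintype.mem_piFinset.2 (Fin.cases hx (Fintype.mem_piFinset.1 hg))

theorem hasSqrtSumsetBound_cube (d : ℕ) :
    HasSqrtSumsetBound (Fintype.piFinset fun _ : Fin d => ({0, 1} : Finset ℤ)) (2 ^ d) := by
  have h0 : ∀ n, (0 : Fin n → ℤ) ∈ Fintype.piFinset fun _ => ({0, 1} : Finset ℤ) :=
    fun n => Fintype.mem_piFinset.2 fun _ => mem_insert_self 0 {1}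
  induction d with
  | zero =>
    rw [pow_zero]
    exact HasSqrtSumsetBound.one ⟨0, h0 0⟩
  | succ d ih =>
    rw [piFinset_const_succ_eq_image_cons, pow_succ']
    exact (ih.zero_one_prod (by positivity) ⟨0, h0 d⟩).image_addEquiv _

theorem sumset_with_cube
    (d : ℕ) (A B : Finset (Fin d → ℤ)) (hA : A.Nonempty) (hB : B.Nonempty)
    (U : Finset (Fin d → ℤ))
    (hU : U = Fintype.piFinset fun _ : Fin d => ({0, 1} : Finset ℤ)) :
    ((A + B + U).card : ℝ) ≥ 2 ^ d * Real.sqrt A.card * Real.sqrt B.card := by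
  subst hU
  exact hasSqrtSumsetBound_cube d A B hA hB
end

section
/- Let A, B ⊆ ℤ be finite nonempty sets, let q ≥ 1, and let U ⊆ {0, q} with U nonempty. Suppose for each residue r mod q we set A_r := {a ∈ A : a ≡ r (mod q)} and B_s := {b ∈ B : b ≡ s (mod q)}, and let r* maximize |A_r|. Then |A + B + U| ≥ |U| · |A_{r*}|^{1/2} · ∑_{s ∈ ℤ/qℤ} |B_s|^{1/2}. -/
/-!
Split `A + B + U` according to residues mod `q`. Since every element of `U` is `0` mod `q`, the
sets `A_{r*} + B_s + U` lie in the distinct residue classes `r* + s`, so their sizes add up to at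
most `|A + B + U|`. Each of them is bounded below by Cauchy–Davenport in `ℤ`,
`|X + Y + U| ≥ |X| + |Y| + |U| - 2`, and since `|U| ≤ 2` this dominates `|U| √|X| √|Y|` by AM-GM.
-/

open scoped Pointwise

lemma Real.mul_sqrt_mul_sqrt_le {u x y : ℝ} (hu : u ≤ 2) (hx : 1 ≤ x) (hy : 1 ≤ y) :
    u * √x * √y ≤ x + y + u - 2 := by
  have amgm : 2 * (√x * √y) ≤ x + y := by
    nlinarith [sq_nonneg (√x - √y), Real.sq_sqrt (zero_le_one.trans hx),
      Real.sq_sqrt (zero_le_one.trans hy)]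
  have hxy : 1 ≤ √x * √y := one_le_mul_of_one_le_of_one_le (Real.one_le_sqrt.2 hx)
    (Real.one_le_sqrt.2 hy)
  nlinarith [mul_nonneg (sub_nonneg.2 hu) (sub_nonneg.2 hxy)]

namespace Finset

section LinearOrder

variable {α : Type*} [LinearOrder α] [Add α] [IsCancelAdd α] [AddLeftMono α] [AddRightMono α]

lemma card_add_add_card_le_card_add_add {X Y U : Finset α}
    (hX : X.Nonempty) (hY : Y.Nonempty) (hU : U.Nonempty) :
    #X + #Y + #U ≤ #(X + Y + U) + 2 := by
  have hXY := cauchy_davenport_add_of_linearOrder_isCancelAdd hX hY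
  have hXYU := cauchy_davenport_add_of_linearOrder_isCancelAdd (hX.add hY) hU
  have := hX.card_pos
  have := hU.card_pos
  omega

lemma card_mul_sqrt_mul_sqrt_le_card_add_add (X Y U : Finset α) (hU : #U ≤ 2) :
    #U * √(#X : ℝ) * √(#Y : ℝ) ≤ #(X + Y + U) := by
  rcases X.eq_empty_or_nonempty with rfl | hX
  · simp
  rcases Y.eq_empty_or_nonempty with rfl | hY
  · simp
  rcases U.eq_empty_or_nonempty with rfl | hU'
  · simp
  have hcard : (#X + #Y + #U : ℝ) ≤ #(X + Y + U) + 2 := by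
    exact_mod_cast card_add_add_card_le_card_add_add hX hY hU'
  have := Real.mul_sqrt_mul_sqrt_le (by exact_mod_cast hU : (#U : ℝ) ≤ 2)
    (Nat.one_le_cast.2 hX.card_pos) (Nat.one_le_cast.2 hY.card_pos)
  linarith

end LinearOrder

variable {α G : Type*} [DecidableEq α] [AddCommMonoid α] [AddCommMonoid G] [DecidableEq G]

lemma filter_add_filter_add_subset_filter (φ : α →+ G) (A B U : Finset α) (r s : G)
    (hU : ∀ u ∈ U, φ u = 0) :
    {a ∈ A | φ a = r} + {b ∈ B | φ b = s} + U ⊆ {x ∈ A + B + U | φ x = r + s} := by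
  intro x hx
  obtain ⟨y, hy, u, hu, rfl⟩ := mem_add.1 hx
  obtain ⟨a, ha, b, hb, rfl⟩ := mem_add.1 hy
  rw [mem_filter] at ha hb
  refine mem_filter.2 ⟨add_mem_add (add_mem_add ha.1 hb.1) hu, ?_⟩
  rw [map_add, map_add, ha.2, hb.2, hU u hu, add_zero]

end Finset

open Finset in
theorem sumset_fibre_lower_bound_general
    (A B : Finset ℤ)
    (q : ℕ) [NeZero q] (U : Finset ℤ)
    (hU : U ⊆ {0, (q : ℤ)})
    (Af Bf : ZMod q → Finset ℤ)
    (hAf : ∀ r, Af r = A.filter fun a : ℤ => ((Int.cast a : ZMod q) = r))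
    (hBf : ∀ s, Bf s = B.filter fun b : ℤ => ((Int.cast b : ZMod q) = s))
    (r' : ZMod q) :
    ((A + B + U).card : ℝ) ≥
      U.card * Real.sqrt ((Af r').card) * ∑ s : ZMod q, Real.sqrt ((Bf s).card) := by
  let φ := Int.castAddHom (ZMod q)
  have hU₂ : #U ≤ 2 := (card_le_card hU).trans card_le_two
  have hU₀ : ∀ u ∈ U, φ u = 0 := fun u hu => by
    rcases mem_insert.1 (hU hu) with rfl | hu
    · simp
    · simp [mem_singleton.1 hu, φ]
  have hfibre (s : ZMod q) : Af r' + Bf s + U ⊆ {x ∈ A + B + U | φ x = r' + s} := by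
    rw [hAf, hBf]
    exact filter_add_filter_add_subset_filter φ A B U r' s hU₀
  calc (#U : ℝ) * √(#(Af r') : ℝ) * ∑ s, √(#(Bf s) : ℝ)
      = ∑ s, #U * √(#(Af r') : ℝ) * √(#(Bf s) : ℝ) := mul_sum ..
    _ ≤ ∑ s, (#{x ∈ A + B + U | φ x = r' + s} : ℝ) := sum_le_sum fun s _ =>
        (card_mul_sqrt_mul_sqrt_le_card_add_add _ _ _ hU₂).trans
          (Nat.cast_le.2 (card_le_card (hfibre s)))
    _ = ∑ t, (#{x ∈ A + B + U | φ x = t} : ℝ) :=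
        Equiv.sum_comp (Equiv.addLeft r') fun t => (#{x ∈ A + B + U | φ x = t} : ℝ)
    _ = #(A + B + U) := by
      exact_mod_cast (card_eq_sum_card_fiberwise fun x _ => mem_coe.2 (mem_univ (φ x))).symm

theorem sumset_fibre_lower_bound
    (A B : Finset ℤ) (hA : A.Nonempty) (hB : B.Nonempty)
    (q : ℕ) [NeZero q] (U : Finset ℤ)
    (hU : U ⊆ {0, (q : ℤ)}) (hUne : U.Nonempty)
    (Af Bf : ZMod q → Finset ℤ)
    (hAf : ∀ r, Af r = A.filter fun a : ℤ => ((Int.cast a : ZMod q) = r))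
    (hBf : ∀ s, Bf s = B.filter fun b : ℤ => ((Int.cast b : ZMod q) = s))
    (r' : ZMod q) (hr' : ∀ r, (Af r).card ≤ (Af r').card) :
    ((A + B + U).card : ℝ) ≥
      U.card * Real.sqrt ((Af r').card) * ∑ s : ZMod q, Real.sqrt ((Bf s).card) :=
  sumset_fibre_lower_bound_general A B q U hU Af Bf hAf hBf r'
end

section
/- Let a, b : ℤ → [0,∞) be finitely supported. Then ∑_{n ∈ ℤ} (a ⊛ b)(n) ≥ ‖a‖₂ · ‖b‖₂, where (a ⊛ b)(n) := sup_{m} a(n−m)b(m). -/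
theorem tsum_maxconv_ge
    (a b : ℤ → ℝ) (ha : ∀ n, 0 ≤ a n) (hb : ∀ n, 0 ≤ b n)
    (hsa : (Function.support a).Finite) (hsb : (Function.support b).Finite) :
    ∑' n : ℤ, (⨆ m : ℤ, a (n - m) * b m) ≥
      Real.sqrt (∑' n : ℤ, a n ^ 2) * Real.sqrt (∑' n : ℤ, b n ^ 2) := by
  classical
  set A := hsa.toFinset with hAdef
  set B := hsb.toFinset with hBdef
  have hmemA : ∀ n, n ∈ A ↔ a n ≠ 0 := fun n => by simp [hAdef, Function.mem_support]
  have hmemB : ∀ n, n ∈ B ↔ b n ≠ 0 := fun n => by simp [hBdef, Function.mem_support]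
  -- global bounds
  set Ca : ℝ := ∑ x ∈ A, a x with hCa
  set Cb : ℝ := ∑ x ∈ B, b x with hCb
  have hCa0 : 0 ≤ Ca := Finset.sum_nonneg fun x _ => ha x
  have hCb0 : 0 ≤ Cb := Finset.sum_nonneg fun x _ => hb x
  have haC : ∀ n, a n ≤ Ca := by
    intro n
    by_cases h : n ∈ A
    · exact Finset.single_le_sum (fun x _ => ha x) h
    · have : a n = 0 := by by_contra h'; exact h ((hmemA n).mpr h')
      rw [this]; exact hCa0
  have hbC : ∀ n, b n ≤ Cb := by
    intro n
    by_cases h : n ∈ B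
    · exact Finset.single_le_sum (fun x _ => hb x) h
    · have : b n = 0 := by by_contra h'; exact h ((hmemB n).mpr h')
      rw [this]; exact hCb0
  have hrange : ∀ n : ℤ, BddAbove (Set.range fun m : ℤ => a (n - m) * b m) := by
    intro n
    refine ⟨Ca * Cb, ?_⟩
    rintro _ ⟨m, rfl⟩
    exact mul_le_mul (haC _) (hbC _) (hb m) hCa0
  set f : ℤ → ℝ := fun n => ⨆ m : ℤ, a (n - m) * b m with hfdef
  have hterm : ∀ n m : ℤ, a (n - m) * b m ≤ f n := fun n m => le_ciSup (hrange n) m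
  have hf0 : ∀ n, 0 ≤ f n := fun n => le_trans (mul_nonneg (ha (n - 0)) (hb 0)) (hterm n 0)
  -- support of f is finite
  set S : Finset ℤ := Finset.image (fun p : ℤ × ℤ => p.1 + p.2) (A ×ˢ B) with hSdef
  have hfS : ∀ n ∉ S, f n = 0 := by
    intro n hn
    have hz : (fun m : ℤ => a (n - m) * b m) = fun _ => 0 := by
      funext m
      by_contra h
      have h1 : a (n - m) ≠ 0 := fun h' => h (by simp [h'])
      have h2 : b m ≠ 0 := fun h' => h (by simp [h'])
      exact hn (by
        rw [hSdef, Finset.mem_image]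
        exact ⟨(n - m, m), Finset.mem_product.mpr ⟨(hmemA _).mpr h1, (hmemB _).mpr h2⟩, by ring⟩)
    rw [hfdef]; simp only [hz]; exact ciSup_const
  have hsumf : Summable f := summable_of_ne_finset_zero hfS
  have hsuma : Summable a :=
    summable_of_ne_finset_zero (s := A) fun n hn => by
      by_contra h; exact hn ((hmemA n).mpr h)
  have hsumb : Summable b :=
    summable_of_ne_finset_zero (s := B) fun n hn => by
      by_contra h; exact hn ((hmemB n).mpr h)
  have hsuma2 : Summable (fun n => a n ^ 2) :=
    summable_of_ne_finset_zero (s := A) fun n hn => by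
      have : a n = 0 := by by_contra h; exact hn ((hmemA n).mpr h)
      simp [this]
  have hsumb2 : Summable (fun n => b n ^ 2) :=
    summable_of_ne_finset_zero (s := B) fun n hn => by
      have : b n = 0 := by by_contra h; exact hn ((hmemB n).mpr h)
      simp [this]
  have hSf0 : 0 ≤ ∑' n, f n := tsum_nonneg hf0
  -- degenerate cases
  by_cases hea : ∃ n, a n ≠ 0
  case neg =>
    push_neg at hea
    have : (∑' n : ℤ, a n ^ 2) = 0 := by simp [hea]
    rw [ge_iff_le, this, Real.sqrt_zero, zero_mul]
    exact hSf0
  by_cases heb : ∃ n, b n ≠ 0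
  case neg =>
    push_neg at heb
    have : (∑' n : ℤ, b n ^ 2) = 0 := by simp [heb]
    rw [ge_iff_le, this, Real.sqrt_zero, mul_zero]
    exact hSf0
  obtain ⟨na, hna⟩ := hea
  obtain ⟨nb, hnb⟩ := heb
  -- maximizers
  obtain ⟨ma, hmaA, hma⟩ := Finset.exists_max_image A a ⟨na, (hmemA na).mpr hna⟩
  obtain ⟨mb, hmbB, hmb⟩ := Finset.exists_max_image B b ⟨nb, (hmemB nb).mpr hnb⟩
  have hma' : ∀ n, a n ≤ a ma := by
    intro n
    by_cases h : n ∈ A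
    · exact hma n h
    · have : a n = 0 := by by_contra h'; exact h ((hmemA n).mpr h')
      rw [this]; exact ha ma
  have hmb' : ∀ n, b n ≤ b mb := by
    intro n
    by_cases h : n ∈ B
    · exact hmb n h
    · have : b n = 0 := by by_contra h'; exact h ((hmemB n).mpr h')
      rw [this]; exact hb mb
  set Sa : ℝ := ∑' n, a n with hSa
  set Sb : ℝ := ∑' n, b n with hSb
  have hSa0 : 0 ≤ Sa := tsum_nonneg ha
  have hSb0 : 0 ≤ Sb := tsum_nonneg hb
  -- shifted sums
  have hshift_a : (∑' n : ℤ, a (n - mb)) = Sa := by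
    rw [hSa]
    exact (Equiv.subRight mb).tsum_eq a
  have hshift_b : (∑' n : ℤ, b (n - ma)) = Sb := by
    rw [hSb]
    exact (Equiv.subRight ma).tsum_eq b
  have hsuma_shift : Summable (fun n : ℤ => a (n - mb)) :=
    (Equiv.subRight mb).summable_iff.mpr hsuma
  have hsumb_shift : Summable (fun n : ℤ => b (n - ma)) :=
    (Equiv.subRight ma).summable_iff.mpr hsumb
  -- h1 : Sa * b mb ≤ ∑' f
  have h1 : Sa * b mb ≤ ∑' n, f n := by
    have : (∑' n : ℤ, a (n - mb) * b mb) ≤ ∑' n, f n :=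
      Summable.tsum_le_tsum (fun n => hterm n mb) (hsuma_shift.mul_right _) hsumf
    rwa [tsum_mul_right, hshift_a] at this
  have h2 : a ma * Sb ≤ ∑' n, f n := by
    have hterm' : ∀ n : ℤ, a ma * b (n - ma) ≤ f n := by
      intro n
      have := hterm n (n - ma)
      have he : n - (n - ma) = ma := by ring
      rwa [he] at this
    have : (∑' n : ℤ, a ma * b (n - ma)) ≤ ∑' n, f n :=
      Summable.tsum_le_tsum hterm' (hsumb_shift.mul_left _) hsumf
    rwa [tsum_mul_left, hshift_b] at this
  -- h3 : ∑ a^2 ≤ a ma * Sa, similarly for b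
  have h3 : (∑' n : ℤ, a n ^ 2) ≤ a ma * Sa := by
    have : (∑' n : ℤ, a n ^ 2) ≤ ∑' n : ℤ, a ma * a n :=
      Summable.tsum_le_tsum (fun n => by
        rw [sq]; exact mul_le_mul_of_nonneg_right (hma' n) (ha n)) hsuma2 (hsuma.mul_left _)
    rwa [tsum_mul_left] at this
  have h4 : (∑' n : ℤ, b n ^ 2) ≤ b mb * Sb := by
    have : (∑' n : ℤ, b n ^ 2) ≤ ∑' n : ℤ, b mb * b n :=
      Summable.tsum_le_tsum (fun n => by
        rw [sq]; exact mul_le_mul_of_nonneg_right (hmb' n) (hb n)) hsumb2 (hsumb.mul_left _)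
    rwa [tsum_mul_left] at this
  rw [ge_iff_le]
  calc Real.sqrt (∑' n : ℤ, a n ^ 2) * Real.sqrt (∑' n : ℤ, b n ^ 2)
      ≤ Real.sqrt (a ma * Sa) * Real.sqrt (b mb * Sb) :=
        mul_le_mul (Real.sqrt_le_sqrt h3) (Real.sqrt_le_sqrt h4) (Real.sqrt_nonneg _)
          (Real.sqrt_nonneg _)
    _ = Real.sqrt ((Sa * b mb) * (a ma * Sb)) := by
        rw [← Real.sqrt_mul (mul_nonneg (ha ma) hSa0)]; ring_nf
    _ ≤ Real.sqrt ((∑' n, f n) * (∑' n, f n)) :=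
        Real.sqrt_le_sqrt (mul_le_mul h1 h2 (mul_nonneg (ha ma) hSb0) hSf0)
    _ = ∑' n, f n := Real.sqrt_mul_self hSf0
end
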